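/- arXiv:1503.08985 — 4 statements merged into one kernel-verified Lean document; each statement's English description precedes it below -/
import Mathlib

section
/- Let q ≥ 0 and θ ∈ (q/(q+1), 1), and let η₁, c, B > 0 satisfy η₁² c² + 2 η₁ B ≤ 1 − θ. Suppose a sequence (a_t)_{t≥1} of nonnegative reals satisfies a₁ = 0 and a_{t+1}² ≤ a_t² + η₁² t^{−2θ} c² max{1, a_t^{2q}} + 2 η₁ t^{−θ} B for all t ≥ 1. Then a_{t+1} ≤ t^{(1−θ)/2} for all t ≥ 1. -/
theorem iterate_norm_bound (q θ η₁ c B : ℝ)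
    (hq : 0 ≤ q) (hθl : q / (q + 1) < θ) (hθu : θ < 1)
    (hη₁ : 0 < η₁) (hc : 0 < c) (hB : 0 < B)
    (hcond : η₁ ^ 2 * c ^ 2 + 2 * η₁ * B ≤ 1 - θ)
    (a : ℕ → ℝ) (ha0 : ∀ t, 0 ≤ a t) (ha1 : a 1 = 0)
    (hrec : ∀ t : ℕ, 1 ≤ t →
      a (t + 1) ^ 2 ≤ a t ^ 2 + η₁ ^ 2 * (t : ℝ) ^ (-(2 * θ)) * c ^ 2 * max 1 (a t ^ (2 * q))
        + 2 * η₁ * (t : ℝ) ^ (-θ) * B) :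
    ∀ t : ℕ, 1 ≤ t → a (t + 1) ≤ (t : ℝ) ^ ((1 - θ) / 2) := by
  have hθ0 : 0 < θ := lt_of_le_of_lt (by positivity) hθl
  have h1θ : 0 < 1 - θ := by linarith
  have hqθ : (1 - θ) * q ≤ θ := by
    have hq1 : 0 < q + 1 := by linarith
    rw [div_lt_iff₀ hq1] at hθl
    nlinarith
  have key : ∀ t : ℕ, 1 ≤ t → a (t + 1) ^ 2 ≤ (t : ℝ) ^ (1 - θ) := by
    intro t ht
    induction t, ht using Nat.le_induction with
    | base =>
      have h := hrec 1 le_rfl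
      simp only [ha1, Nat.cast_one, Real.one_rpow] at h
      have h0 : (0:ℝ) ^ (2 * q) ≤ 1 :=
        Real.rpow_le_one le_rfl zero_le_one (by positivity)
      rw [max_eq_left h0] at h
      have : ((1:ℕ) : ℝ) ^ (1 - θ) = 1 := by norm_num [Real.one_rpow]
      rw [this]
      nlinarith
    | succ t ht IH =>
      set T : ℝ := (t : ℝ) with hTdef
      have hT : 1 ≤ T := by rw [hTdef]; exact_mod_cast ht
      have hT0 : 0 < T := by linarith
      have hT1 : (0:ℝ) < T + 1 := by linarith
      have hstepA : a (t + 1) ≤ T ^ ((1 - θ) / 2) := by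
        have hsq : (T ^ ((1 - θ) / 2)) ^ 2 = T ^ (1 - θ) := by
          rw [← Real.rpow_natCast (T ^ ((1 - θ) / 2)) 2, ← Real.rpow_mul hT0.le]
          norm_num
        refine le_of_pow_le_pow_left₀ two_ne_zero (by positivity) ?_
        rw [hsq]; exact IH
      have hpow : a (t + 1) ^ (2 * q) ≤ T ^ ((1 - θ) * q) := by
        calc a (t + 1) ^ (2 * q) ≤ (T ^ ((1 - θ) / 2)) ^ (2 * q) :=
              Real.rpow_le_rpow (ha0 _) hstepA (by positivity)
          _ = T ^ ((1 - θ) * q) := by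
              rw [← Real.rpow_mul hT0.le]; ring_nf
      have hone : (1:ℝ) ≤ T ^ ((1 - θ) * q) :=
        Real.one_le_rpow hT (by positivity)
      have hmax : max 1 (a (t + 1) ^ (2 * q)) ≤ T ^ ((1 - θ) * q) := max_le hone hpow
      set P : ℝ := (T + 1) ^ (-θ) with hPdef
      have hP0 : 0 < P := Real.rpow_pos_of_pos hT1 _
      have hTq : T ^ ((1 - θ) * q) ≤ (T + 1) ^ θ :=
        le_trans (Real.rpow_le_rpow hT0.le (by linarith) (by positivity))
          (Real.rpow_le_rpow_of_exponent_le (by linarith) hqθ)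
      have hmulinv : (T + 1) ^ θ * P = 1 := by
        rw [hPdef, ← Real.rpow_add hT1]; simp
      have hSP : T ^ ((1 - θ) * q) * P ≤ 1 := by
        calc T ^ ((1 - θ) * q) * P ≤ (T + 1) ^ θ * P :=
              mul_le_mul_of_nonneg_right hTq hP0.le
          _ = 1 := hmulinv
      have hP2 : (T + 1) ^ (-(2 * θ)) = P * P := by
        rw [hPdef, ← Real.rpow_add hT1]; ring_nf
      have hAM : T ^ (1 - θ) * (T + 1) ^ θ ≤ (1 - θ) * T + θ * (T + 1) :=
        Real.geom_mean_le_arith_mean2_weighted h1θ.le hθ0.le hT0.le hT1.le (by ring)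
      have hTfinal : T ^ (1 - θ) ≤ (T + θ) * P := by
        have := mul_le_mul_of_nonneg_right hAM hP0.le
        calc T ^ (1 - θ) = T ^ (1 - θ) * ((T + 1) ^ θ * P) := by rw [hmulinv]; ring
          _ ≤ ((1 - θ) * T + θ * (T + 1)) * P := by nlinarith [Real.rpow_nonneg hT0.le (1 - θ)]
          _ = (T + θ) * P := by ring
      have hgoalP : ((t:ℝ) + 1) ^ (1 - θ) = (T + 1) * P := by
        rw [hPdef, ← hTdef]
        rw [show (1 - θ) = 1 + (-θ) by ring, Real.rpow_add hT1, Real.rpow_one]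
      have h := hrec (t + 1) (by omega)
      push_cast at h ⊢
      rw [← hTdef] at h ⊢
      rw [hP2, ← hPdef] at h
      rw [hgoalP]
      have hPM : P * max 1 (a (t + 1) ^ (2 * q)) ≤ 1 := by
        calc P * max 1 (a (t + 1) ^ (2 * q)) ≤ P * T ^ ((1 - θ) * q) :=
              mul_le_mul_of_nonneg_left hmax hP0.le
          _ ≤ 1 := by linarith [hSP]
      have hterm1 : η₁ ^ 2 * (P * P) * c ^ 2 * max 1 (a (t + 1) ^ (2 * q))
          ≤ η₁ ^ 2 * c ^ 2 * P := by
        calc η₁ ^ 2 * (P * P) * c ^ 2 * max 1 (a (t + 1) ^ (2 * q))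
            = η₁ ^ 2 * c ^ 2 * P * (P * max 1 (a (t + 1) ^ (2 * q))) := by ring
          _ ≤ η₁ ^ 2 * c ^ 2 * P * 1 :=
              mul_le_mul_of_nonneg_left hPM (by positivity)
          _ = η₁ ^ 2 * c ^ 2 * P := mul_one _
      have hc2 : P * (η₁ ^ 2 * c ^ 2 + 2 * η₁ * B) ≤ P * (1 - θ) :=
        mul_le_mul_of_nonneg_left hcond hP0.le
      linarith [h, IH, hTfinal, hterm1, hc2]
  intro t ht
  have hT0 : (0:ℝ) < (t:ℝ) := by exact_mod_cast ht
  have hsq : ((t:ℝ) ^ ((1 - θ) / 2)) ^ 2 = (t:ℝ) ^ (1 - θ) := by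
    rw [← Real.rpow_natCast ((t:ℝ) ^ ((1 - θ) / 2)) 2, ← Real.rpow_mul hT0.le]
    norm_num
  refine le_of_pow_le_pow_left₀ two_ne_zero (by positivity) ?_
  rw [hsq]; exact key t ht
end

section
/- Let θ ∈ (0,1) and T ≥ 2 an integer. Then ∑_{k=1}^∞ (T/(T+1))^k · 1/(k − θ) ≤ 1/(1−θ) + log(1/(1−θ)) + 2 log 4 + log T. -/
/-! Splitting off the first term, which is at most `1 / (1 - θ)`, every remaining term
`r ^ (k + 2) / (k + 2 - θ)` is dominated by `r ^ (k + 1) / (k + 1)`, and these sum to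
`-log (1 - r)`, which for `r = T / (T + 1)` is `log (T + 1) ≤ log 2 + log T`. -/

open Real

lemma pow_succ_succ_mul_one_div_le {r θ : ℝ} (hr0 : 0 ≤ r) (hr1 : r ≤ 1) (hθ : θ ≤ 1) (k : ℕ) :
    r ^ (k + 1 + 1) * (1 / (((k + 1 : ℕ) : ℝ) + 1 - θ)) ≤ r ^ (k + 1) / (k + 1) := by
  have hpow : r ^ (k + 1 + 1) ≤ r ^ (k + 1) := pow_le_pow_of_le_one hr0 hr1 (by omega)
  have hinv : 1 / (((k + 1 : ℕ) : ℝ) + 1 - θ) ≤ 1 / ((k : ℝ) + 1) := by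
    apply one_div_le_one_div_of_le (by positivity)
    push_cast
    linarith
  have hden : 0 ≤ 1 / (((k + 1 : ℕ) : ℝ) + 1 - θ) := by
    apply one_div_nonneg.mpr
    push_cast
    linarith [k.cast_nonneg (α := ℝ)]
  calc r ^ (k + 1 + 1) * (1 / (((k + 1 : ℕ) : ℝ) + 1 - θ))
      ≤ r ^ (k + 1) * (1 / ((k : ℝ) + 1)) := by gcongr
    _ = r ^ (k + 1) / (k + 1) := by ring

lemma tsum_pow_succ_mul_one_div_sub_le {r θ : ℝ} (hr0 : 0 ≤ r) (hr1 : r < 1) (hθ : θ < 1) :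
    ∑' k : ℕ, r ^ (k + 1) * (1 / ((k : ℝ) + 1 - θ)) ≤ r / (1 - θ) - log (1 - r) := by
  set f : ℕ → ℝ := fun k => r ^ (k + 1) * (1 / ((k : ℝ) + 1 - θ)) with hf
  have hlog : HasSum (fun k : ℕ => r ^ (k + 1) / (k + 1)) (-log (1 - r)) :=
    hasSum_pow_div_log_of_abs_lt_one (by rwa [abs_of_nonneg hr0])
  have htail_le : ∀ k, f (k + 1) ≤ r ^ (k + 1) / (k + 1) :=
    pow_succ_succ_mul_one_div_le hr0 hr1.le hθ.le
  have htail_nonneg : ∀ k, 0 ≤ f (k + 1) := fun k => by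
    have : 0 < ((k + 1 : ℕ) : ℝ) + 1 - θ := by push_cast; linarith [k.cast_nonneg (α := ℝ)]
    positivity
  have htail : Summable fun k => f (k + 1) :=
    Summable.of_nonneg_of_le htail_nonneg htail_le hlog.summable
  have hf0 : f 0 = r / (1 - θ) := by simp [hf, div_eq_mul_one_div r]
  rw [((summable_nat_add_iff 1).mp htail).tsum_eq_zero_add, hf0, sub_eq_add_neg]
  exact add_le_add_right (hasSum_le htail_le htail.hasSum hlog) _

lemma neg_log_one_sub_div_add_one {x : ℝ} (hx : 0 ≤ x) : -log (1 - x / (x + 1)) = log (x + 1) := by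
  have : 1 - x / (x + 1) = (x + 1)⁻¹ := by field_simp; ring
  rw [this, log_inv, neg_neg]

lemma log_add_one_le_log_two_add_log {x : ℝ} (hx : 1 ≤ x) : log (x + 1) ≤ log 2 + log x := by
  rw [← log_mul two_ne_zero (by linarith)]
  exact log_le_log (by linarith) (by linarith)

theorem power_series_tail_bound (θ : ℝ) (hθ0 : 0 < θ) (hθ1 : θ < 1)
    (T : ℕ) (hT : 2 ≤ T) :
    ∑' k : ℕ, ((T : ℝ) / (T + 1)) ^ (k + 1) * (1 / ((k : ℝ) + 1 - θ))
      ≤ 1 / (1 - θ) + Real.log (1 / (1 - θ)) + 2 * Real.log 4 + Real.log T := by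
  have hT1 : (1 : ℝ) ≤ T := by exact_mod_cast (by omega : 1 ≤ T)
  have hr1 : (T : ℝ) / (T + 1) < 1 := (div_lt_one (by positivity)).mpr (by linarith)
  have hfirst : (T : ℝ) / (T + 1) / (1 - θ) ≤ 1 / (1 - θ) :=
    div_le_div_of_nonneg_right hr1.le (by linarith)
  have hlog_θ : 0 ≤ log (1 / (1 - θ)) :=
    log_nonneg ((le_div_iff₀ (by linarith)).mpr (by linarith))
  have hlog_two : log 2 ≤ 2 * log 4 := by
    have := log_le_log two_pos (by norm_num : (2 : ℝ) ≤ 4)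
    linarith [log_nonneg (by norm_num : (1 : ℝ) ≤ 4)]
  calc _ ≤ (T : ℝ) / (T + 1) / (1 - θ) - log (1 - T / (T + 1)) :=
        tsum_pow_succ_mul_one_div_sub_le (by positivity) hr1 hθ1
    _ ≤ 1 / (1 - θ) + log 2 + log T := by
        rw [sub_eq_add_neg, neg_log_one_sub_div_add_one (by positivity)]
        linarith [log_add_one_le_log_two_add_log hT1]
    _ ≤ _ := by linarith
end

section
/- Let θ ∈ (0,1), η₁ > 0, η_t = η₁ t^{−θ}, and T ≥ 2 an integer. Then ∑_{k=1}^{T−1} (1/(k+1)) [2η_{T−k} − (1/k) ∑_{t=T−k+1}^{T} 2η_t] ≤ (6η₁/(1−θ)) T^{−θ}, and each summand is nonnegative. -/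
/-!
Write `n = T - k`. Convexity of `x ↦ x ^ (-θ)` gives `η n - η t ≤ η₁ θ n ^ (-θ - 1) (t - n)`, and
averaging over `t ∈ (n, T]` bounds the `k`-th summand by `η₁ θ (T - k) ^ (-θ - 1)`; for `k ≤ T / 2`
these add up to at most `η₁ θ (T / 2) ^ (-θ)`. For `k > T / 2` the summand is at most
`2 η (T - k) / (k + 1) ≤ (4 η₁ / T) (T - k) ^ (-θ)`, and concavity of `x ↦ x ^ (1 - θ)` gives
`∑_{j ≤ m} j ^ (-θ) ≤ m ^ (1 - θ) / (1 - θ)` with `m ≤ T / 2`, so these add up to at most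
`2 η₁ (T / 2) ^ (-θ) / (1 - θ)`. Finally `(T / 2) ^ (-θ) ≤ 2 T ^ (-θ)`.
-/

open Finset Real

theorem one_add_mul_sub_one_le_rpow_of_nonpos {p x : ℝ} (hp : p ≤ 0) (hx : 0 < x) :
    1 + p * (x - 1) ≤ x ^ p := by
  have h := one_add_mul_self_le_rpow_one_add (s := x⁻¹ - 1) (p := 1 - p)
    (by linarith [inv_pos.2 hx]) (by linarith)
  rw [add_sub_cancel, inv_rpow hx.le, ← rpow_neg hx.le, neg_sub] at h
  calc 1 + p * (x - 1) = x * (1 + (1 - p) * (x⁻¹ - 1)) := by field_simp; ring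
    _ ≤ x * x ^ (p - 1) := by gcongr
    _ = x ^ p := by rw [rpow_sub_one hx.ne']; field_simp

theorem rpow_add_mul_rpow_sub_one_mul_sub_le_of_nonpos {p a b : ℝ} (hp : p ≤ 0) (ha : 0 < a)
    (hb : 0 < b) : a ^ p + p * a ^ (p - 1) * (b - a) ≤ b ^ p := by
  have h := one_add_mul_sub_one_le_rpow_of_nonpos hp (div_pos hb ha)
  rw [div_rpow hb.le ha.le, le_div_iff₀ (rpow_pos_of_pos ha p)] at h
  calc a ^ p + p * a ^ (p - 1) * (b - a) = (1 + p * (b / a - 1)) * a ^ p := by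
        rw [rpow_sub_one ha.ne']; field_simp
    _ ≤ b ^ p := h

theorem rpow_le_rpow_add_mul_rpow_sub_one_mul_sub {p a b : ℝ} (hp0 : 0 ≤ p) (hp1 : p ≤ 1)
    (ha : 0 < a) (hb : 0 ≤ b) : b ^ p ≤ a ^ p + p * a ^ (p - 1) * (b - a) := by
  have h := rpow_one_add_le_one_add_mul_self (s := b / a - 1) (by linarith [div_nonneg hb ha.le])
    hp0 hp1
  rw [add_sub_cancel, div_rpow hb ha.le, div_le_iff₀ (rpow_pos_of_pos ha p)] at h
  calc b ^ p ≤ (1 + p * (b / a - 1)) * a ^ p := h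
    _ = a ^ p + p * a ^ (p - 1) * (b - a) := by
        rw [rpow_sub_one ha.ne']; field_simp

theorem div_two_rpow_neg_le {θ x : ℝ} (hθ : θ ≤ 1) (hx : 0 ≤ x) :
    (x / 2) ^ (-θ) ≤ 2 * x ^ (-θ) := by
  rw [div_rpow hx zero_le_two, rpow_neg zero_le_two, div_inv_eq_mul, mul_comm]
  gcongr
  calc (2 : ℝ) ^ θ ≤ 2 ^ (1 : ℝ) := rpow_le_rpow_of_exponent_le one_le_two hθ
    _ = 2 := rpow_one 2

theorem sum_Icc_rpow_neg_le {θ : ℝ} (hθ0 : 0 ≤ θ) (hθ1 : θ < 1) (m : ℕ) :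
    ∑ j ∈ Icc 1 m, (j : ℝ) ^ (-θ) ≤ (m : ℝ) ^ (1 - θ) / (1 - θ) := by
  induction m with
  | zero => simp [zero_rpow (by linarith : 1 - θ ≠ 0)]
  | succ m ih =>
    have hm : (0 : ℝ) < m + 1 := by positivity
    have tangent := rpow_le_rpow_add_mul_rpow_sub_one_mul_sub (p := 1 - θ) (by linarith)
      (by linarith) hm m.cast_nonneg
    rw [show 1 - θ - 1 = -θ by ring] at tangent
    rw [sum_Icc_succ_top (by omega), le_div_iff₀ (by linarith)]
    rw [le_div_iff₀ (by linarith)] at ih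
    push_cast
    nlinarith

theorem card_Icc_sub_add_one {T k : ℕ} (hk : k ≤ T) : #(Icc (T - k + 1) T) = k := by
  rw [Nat.card_Icc]; omega

theorem sum_Icc_cast_sub (n k : ℕ) :
    ∑ t ∈ Icc (n + 1) (n + k), ((t : ℝ) - n) = k * (k + 1) / 2 := by
  induction k with
  | zero => simp
  | succ k ih =>
    rw [← add_assoc, sum_Icc_succ_top (by omega), ih]
    push_cast; ring

theorem sum_Icc_comp_sub {M : Type*} [AddCommMonoid M] (f : ℕ → M) {a : ℕ} (ha : 1 ≤ a) (T : ℕ) :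
    ∑ k ∈ Icc a (T - 1), f (T - k) = ∑ j ∈ Icc 1 (T - a), f j :=
  sum_nbij' (fun k => T - k) (fun j => T - j) (fun k hk => by simp at hk ⊢; omega)
    (fun j hj => by simp at hj ⊢; omega) (fun k hk => by simp at hk; omega)
    (fun j hj => by simp at hj; omega) fun _ _ => rfl

noncomputable def stepsizeGap (η : ℕ → ℝ) (T k : ℕ) : ℝ :=
  (1 / ((k : ℝ) + 1)) * (2 * η (T - k) - (1 / (k : ℝ)) * ∑ t ∈ Icc (T - k + 1) T, 2 * η t)

section

variable {θ η₁ : ℝ} {η : ℕ → ℝ} {T k : ℕ}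

theorem stepsizeGap_nonneg (hη : AntitoneOn η (Set.Ici 1)) (hk : 1 ≤ k) (hkT : k < T) :
    0 ≤ stepsizeGap η T k := by
  have hk0 : (0 : ℝ) < k := by exact_mod_cast hk
  refine mul_nonneg (by positivity) (sub_nonneg.2 ?_)
  have hle : ∑ t ∈ Icc (T - k + 1) T, 2 * η t ≤ #(Icc (T - k + 1) T) • (2 * η (T - k)) := by
    refine sum_le_card_nsmul _ _ _ fun t ht => ?_
    rw [mem_Icc] at ht
    have := hη (Set.mem_Ici.2 (by omega : 1 ≤ T - k)) (Set.mem_Ici.2 (by omega : 1 ≤ t))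
      (by omega : T - k ≤ t)
    linarith
  calc (1 / (k : ℝ)) * ∑ t ∈ Icc (T - k + 1) T, 2 * η t
      ≤ (1 / (k : ℝ)) * (#(Icc (T - k + 1) T) • (2 * η (T - k))) := by gcongr
    _ = 2 * η (T - k) := by rw [card_Icc_sub_add_one hkT.le, nsmul_eq_mul]; field_simp

theorem stepsizeGap_le_of_nonneg (hη : ∀ t, 0 ≤ η t) :
    stepsizeGap η T k ≤ 2 * η (T - k) / (k + 1) := by
  have : 0 ≤ (1 / (k : ℝ)) * ∑ t ∈ Icc (T - k + 1) T, 2 * η t :=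
    mul_nonneg (by positivity) (sum_nonneg fun t _ => by linarith [hη t])
  calc stepsizeGap η T k ≤ (1 / ((k : ℝ) + 1)) * (2 * η (T - k)) := by
        unfold stepsizeGap; gcongr; linarith
    _ = 2 * η (T - k) / (k + 1) := by ring

-- The weight `1 / (k (k + 1))` exactly cancels `∑ t ∈ (T - k, T], (t - (T - k)) = k (k + 1) / 2`.
theorem stepsizeGap_le_of_sub_le {c : ℝ} (hk : 1 ≤ k) (hkT : k ≤ T)
    (h : ∀ t ∈ Icc (T - k + 1) T, η (T - k) - η t ≤ c * ((t : ℝ) - (T - k : ℕ))) :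
    stepsizeGap η T k ≤ c := by
  obtain ⟨n, rfl⟩ : ∃ n, T = n + k := ⟨T - k, by omega⟩
  rw [Nat.add_sub_cancel] at h
  have hk0 : (0 : ℝ) < k := by exact_mod_cast hk
  have hsum : ∑ t ∈ Icc (n + 1) (n + k), 2 * (η n - η t) ≤ c * (k * (k + 1)) := by
    calc ∑ t ∈ Icc (n + 1) (n + k), 2 * (η n - η t)
        ≤ ∑ t ∈ Icc (n + 1) (n + k), 2 * (c * ((t : ℝ) - n)) :=
          sum_le_sum fun t ht => by linarith [h t ht]
      _ = c * (k * (k + 1)) := by rw [← mul_sum, ← mul_sum, sum_Icc_cast_sub]; ring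
  have hgap : stepsizeGap η (n + k) k
      = (1 / ((k : ℝ) + 1)) * (1 / k) * ∑ t ∈ Icc (n + 1) (n + k), 2 * (η n - η t) := by
    simp only [stepsizeGap, Nat.add_sub_cancel, mul_sub, sum_sub_distrib, sum_const,
      Nat.card_Icc, nsmul_eq_mul]
    rw [show n + k + 1 - (n + 1) = k by omega]
    field_simp
  rw [hgap]
  calc (1 / ((k : ℝ) + 1)) * (1 / k) * ∑ t ∈ Icc (n + 1) (n + k), 2 * (η n - η t)
      ≤ (1 / ((k : ℝ) + 1)) * (1 / k) * (c * (k * (k + 1))) := by gcongr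
    _ = c := by field_simp

theorem stepsizeGap_le_rpow_neg_sub_one (hη : ∀ t : ℕ, η t = η₁ * (t : ℝ) ^ (-θ))
    (hθ : 0 ≤ θ) (hη₁ : 0 ≤ η₁) (hk : 1 ≤ k) (hkT : k < T) :
    stepsizeGap η T k ≤ η₁ * θ * ((T - k : ℕ) : ℝ) ^ (-θ - 1) := by
  refine stepsizeGap_le_of_sub_le hk hkT.le fun t ht => ?_
  rw [mem_Icc] at ht
  have hn : (0 : ℝ) < (T - k : ℕ) := by exact_mod_cast (by omega : 0 < T - k)
  have ht0 : (0 : ℝ) < t := by exact_mod_cast (by omega : 0 < t)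
  have tangent := rpow_add_mul_rpow_sub_one_mul_sub_le_of_nonpos (neg_nonpos.2 hθ) hn ht0
  calc η (T - k) - η t = η₁ * (((T - k : ℕ) : ℝ) ^ (-θ) - (t : ℝ) ^ (-θ)) := by
        rw [hη, hη]; ring
    _ ≤ η₁ * (θ * ((T - k : ℕ) : ℝ) ^ (-θ - 1) * ((t : ℝ) - (T - k : ℕ))) := by
        gcongr; linarith
    _ = η₁ * θ * ((T - k : ℕ) : ℝ) ^ (-θ - 1) * ((t : ℝ) - (T - k : ℕ)) := by ring

theorem sum_stepsizeGap_Icc_one_half_le (hη : ∀ t : ℕ, η t = η₁ * (t : ℝ) ^ (-θ))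
    (hθ : 0 ≤ θ) (hη₁ : 0 ≤ η₁) (hT : 0 < T) :
    ∑ k ∈ Icc 1 (T / 2), stepsizeGap η T k ≤ η₁ * θ * ((T : ℝ) / 2) ^ (-θ) := by
  have hT2 : (0 : ℝ) < T / 2 := by positivity
  calc ∑ k ∈ Icc 1 (T / 2), stepsizeGap η T k
      ≤ ∑ k ∈ Icc 1 (T / 2), η₁ * θ * ((T : ℝ) / 2) ^ (-θ - 1) := sum_le_sum fun k hk => by
        rw [mem_Icc] at hk
        refine (stepsizeGap_le_rpow_neg_sub_one hη hθ hη₁ hk.1 (by omega)).trans ?_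
        have h2k : ((2 * k : ℕ) : ℝ) ≤ T := by exact_mod_cast (by omega : 2 * k ≤ T)
        gcongr η₁ * θ * ?_
        refine rpow_le_rpow_of_nonpos hT2 ?_ (by linarith)
        rw [Nat.cast_sub (by omega)]
        push_cast at h2k
        linarith
    _ = (T / 2 : ℕ) * (η₁ * θ * ((T : ℝ) / 2) ^ (-θ - 1)) := by simp
    _ ≤ (T : ℝ) / 2 * (η₁ * θ * ((T : ℝ) / 2) ^ (-θ - 1)) := by
        gcongr; exact Nat.cast_div_le
    _ = η₁ * θ * ((T : ℝ) / 2) ^ (-θ) := by rw [rpow_sub_one hT2.ne']; field_simp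

theorem sum_stepsizeGap_Icc_half_le (hη : ∀ t : ℕ, η t = η₁ * (t : ℝ) ^ (-θ))
    (hθ0 : 0 ≤ θ) (hθ1 : θ < 1) (hη₁ : 0 ≤ η₁) (hT : 0 < T) :
    ∑ k ∈ Icc (T / 2 + 1) (T - 1), stepsizeGap η T k
      ≤ 2 * η₁ / (1 - θ) * ((T : ℝ) / 2) ^ (-θ) := by
  have hT0 : (0 : ℝ) < T := by exact_mod_cast hT
  have hm : ((T - (T / 2 + 1) : ℕ) : ℝ) ≤ T / 2 :=
    le_trans (by exact_mod_cast (by omega : T - (T / 2 + 1) ≤ T / 2)) Nat.cast_div_le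
  calc ∑ k ∈ Icc (T / 2 + 1) (T - 1), stepsizeGap η T k
      ≤ ∑ k ∈ Icc (T / 2 + 1) (T - 1), 4 * η₁ / T * ((T - k : ℕ) : ℝ) ^ (-θ) :=
        sum_le_sum fun k hk => by
          rw [mem_Icc] at hk
          refine (stepsizeGap_le_of_nonneg fun t => by rw [hη]; positivity).trans ?_
          have hTk : (T : ℝ) ≤ 2 * ((k : ℝ) + 1) := by
            exact_mod_cast (by omega : T ≤ 2 * (k + 1))
          rw [hη]
          calc 2 * (η₁ * ((T - k : ℕ) : ℝ) ^ (-θ)) / (k + 1)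
              ≤ 2 * (η₁ * ((T - k : ℕ) : ℝ) ^ (-θ)) / (T / 2) := by gcongr; linarith
            _ = 4 * η₁ / T * ((T - k : ℕ) : ℝ) ^ (-θ) := by field_simp; ring
    _ = 4 * η₁ / T * ∑ j ∈ Icc 1 (T - (T / 2 + 1)), (j : ℝ) ^ (-θ) := by
        rw [← mul_sum, sum_Icc_comp_sub (fun j => (j : ℝ) ^ (-θ)) (by omega)]
    _ ≤ 4 * η₁ / T * (((T : ℝ) / 2) ^ (1 - θ) / (1 - θ)) := by
        gcongr
        refine (sum_Icc_rpow_neg_le hθ0 hθ1 _).trans ?_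
        gcongr
    _ = 2 * η₁ / (1 - θ) * ((T : ℝ) / 2) ^ (-θ) := by
        rw [sub_eq_add_neg, rpow_add (by positivity), rpow_one]
        field_simp
        ring

end

theorem stepsize_difference_sum_bound (θ η₁ : ℝ) (hθ0 : 0 < θ) (hθ1 : θ < 1) (hη₁ : 0 < η₁)
    (η : ℕ → ℝ) (hη : ∀ t : ℕ, η t = η₁ * (t : ℝ) ^ (-θ))
    (T : ℕ) (hT : 2 ≤ T) :
    (∑ k ∈ Finset.Icc 1 (T - 1),
        (1 / ((k : ℝ) + 1)) * (2 * η (T - k) - (1 / (k : ℝ)) * ∑ t ∈ Finset.Icc (T - k + 1) T, 2 * η t)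
      ≤ (6 * η₁ / (1 - θ)) * (T : ℝ) ^ (-θ)) ∧
    ∀ k ∈ Finset.Icc 1 (T - 1),
      0 ≤ (1 / ((k : ℝ) + 1)) * (2 * η (T - k) - (1 / (k : ℝ)) * ∑ t ∈ Finset.Icc (T - k + 1) T, 2 * η t) := by
  have hT0 : 0 < T := by omega
  have hη_anti : AntitoneOn η (Set.Ici 1) := fun s hs t _ hst => by
    rw [hη, hη]
    gcongr η₁ * ?_
    exact rpow_le_rpow_of_nonpos (by exact_mod_cast hs) (by exact_mod_cast hst) (by linarith)
  refine ⟨?_, fun k hk => stepsizeGap_nonneg hη_anti (mem_Icc.1 hk).1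
    (by have := mem_Icc.1 hk; omega)⟩
  have hsplit : ∑ k ∈ Icc 1 (T - 1), stepsizeGap η T k
      = ∑ k ∈ Icc 1 (T / 2), stepsizeGap η T k
        + ∑ k ∈ Icc (T / 2 + 1) (T - 1), stepsizeGap η T k := by
    simpa only [← Icc_add_one_left_eq_Ioc, zero_add] using
      (sum_Ioc_consecutive (stepsizeGap η T) (Nat.zero_le (T / 2)) (by omega)).symm
  have h1θ : 0 < 1 - θ := by linarith
  have hθη : η₁ * θ ≤ η₁ / (1 - θ) :=
    (mul_le_of_le_one_right hη₁.le hθ1.le).trans (le_div_self hη₁.le h1θ (by linarith))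
  calc ∑ k ∈ Icc 1 (T - 1), stepsizeGap η T k
      ≤ η₁ * θ * ((T : ℝ) / 2) ^ (-θ) + 2 * η₁ / (1 - θ) * ((T : ℝ) / 2) ^ (-θ) := by
        rw [hsplit]
        exact add_le_add (sum_stepsizeGap_Icc_one_half_le hη hθ0.le hη₁.le hT0)
          (sum_stepsizeGap_Icc_half_le hη hθ0.le hθ1 hη₁.le hT0)
    _ ≤ (η₁ / (1 - θ) + 2 * η₁ / (1 - θ)) * ((T : ℝ) / 2) ^ (-θ) := by
        rw [← add_mul]; gcongr
    _ ≤ (η₁ / (1 - θ) + 2 * η₁ / (1 - θ)) * (2 * (T : ℝ) ^ (-θ)) := by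
        gcongr; exact div_two_rpow_neg_le hθ1.le T.cast_nonneg
    _ = 6 * η₁ / (1 - θ) * (T : ℝ) ^ (-θ) := by ring
end

section
/- Let H be a real inner product space and F : H → ℝ convex, differentiable with L-Lipschitz gradient, and suppose F(0) ≤ B for some B ≥ 0 and F is nonnegative. Let f₁ = 0 and f_{t+1} = f_t − η_t ∇F(f_t) with 0 < η_t ≤ 1/L. Then ‖f_{t+1}‖² ≤ 2B ∑_{k=1}^{t} η_k for all t ≥ 1. -/
/-!
For a step `x⁺ = x - η g x` with `0 ≤ η ≤ 1/L`, the descent lemma and the first-order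
characterisation of convexity combine to `2η (F x⁺ - F z) ≤ ‖x - z‖² - ‖x⁺ - z‖²`. Taking `z = 0`
and using `F ≥ 0`, `F 0 ≤ B` gives `‖x⁺‖² ≤ ‖x‖² + 2ηB`, which telescopes from `f 1 = 0`.
-/

open RealInnerProductSpace Finset

section Gradient

variable {H : Type*} [NormedAddCommGroup H] [InnerProductSpace ℝ H] {F : H → ℝ} {g : H → H}

theorem hasDerivAt_comp_add_smul (hgrad : ∀ x, HasFDerivAt F (innerSL ℝ (g x)) x)
    (x v : H) (t : ℝ) : HasDerivAt (fun s : ℝ => F (x + s • v)) ⟪g (x + t • v), v⟫ t := by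
  have hline : HasDerivAt (fun s : ℝ => x + s • v) v t := by
    simpa using ((hasDerivAt_id t).smul_const v).const_add x
  exact (hgrad (x + t • v)).comp_hasDerivAt t hline

theorem ConvexOn.add_inner_sub_le (hconv : ConvexOn ℝ Set.univ F)
    (hgrad : ∀ x, HasFDerivAt F (innerSL ℝ (g x)) x) (x y : H) :
    F x + ⟪g x, y - x⟫ ≤ F y := by
  have hline : ConvexOn ℝ Set.univ (fun s : ℝ => F (x + s • (y - x))) := by
    have hcomp : (fun s : ℝ => F (x + s • (y - x))) = F ∘ AffineMap.lineMap x y := by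
      ext s
      rw [Function.comp_apply, AffineMap.lineMap_apply_module', add_comm]
    simpa [hcomp] using hconv.comp_affineMap (AffineMap.lineMap x y)
  have h := hline.le_slope_of_hasDerivAt (Set.mem_univ 0) (Set.mem_univ 1) zero_lt_one
    (by simpa using hasDerivAt_comp_add_smul hgrad x (y - x) 0)
  simp only [slope_def_field, zero_smul, add_zero, one_smul, add_sub_cancel] at h
  linarith

theorem apply_add_le_of_lipschitz_gradient {L : ℝ}
    (hgrad : ∀ x, HasFDerivAt F (innerSL ℝ (g x)) x)
    (hlip : ∀ x y, ‖g x - g y‖ ≤ L * ‖x - y‖) (x v : H) :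
    F (x + v) ≤ F x + ⟪g x, v⟫ + L / 2 * ‖v‖ ^ 2 := by
  -- `F` along the ray minus its quadratic upper model; Lipschitz continuity of `g` makes it antitone.
  set ψ : ℝ → ℝ := fun t => F (x + t • v) - t * ⟪g x, v⟫ - L * ‖v‖ ^ 2 * t ^ 2 / 2
  have hψ : ∀ t, HasDerivAt ψ (⟪g (x + t • v) - g x, v⟫ - L * ‖v‖ ^ 2 * t) t := by
    intro t
    refine (((hasDerivAt_comp_add_smul hgrad x v t).sub
      ((hasDerivAt_id t).mul_const ⟪g x, v⟫)).sub
      (((hasDerivAt_pow 2 t).const_mul (L * ‖v‖ ^ 2)).div_const 2)).congr_deriv ?_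
    rw [inner_sub_left]
    simp only [one_mul, Nat.cast_ofNat]
    ring
  have hψ_nonpos : ∀ t ∈ interior (Set.Ici (0 : ℝ)),
      ⟪g (x + t • v) - g x, v⟫ - L * ‖v‖ ^ 2 * t ≤ 0 := by
    intro t ht
    have ht : 0 < t := by simpa using ht
    have hg : ‖g (x + t • v) - g x‖ ≤ L * t * ‖v‖ := by
      simpa [norm_smul, abs_of_pos ht, mul_assoc] using hlip (x + t • v) x
    refine sub_nonpos.mpr ?_
    calc ⟪g (x + t • v) - g x, v⟫ ≤ ‖g (x + t • v) - g x‖ * ‖v‖ := real_inner_le_norm _ _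
      _ ≤ L * t * ‖v‖ * ‖v‖ := by gcongr
      _ = L * ‖v‖ ^ 2 * t := by ring
  have hanti : AntitoneOn ψ (Set.Ici 0) :=
    antitoneOn_of_hasDerivWithinAt_nonpos (convex_Ici 0)
      (fun t _ => (hψ t).continuousAt.continuousWithinAt)
      (fun t _ => (hψ t).hasDerivWithinAt) hψ_nonpos
  have h := hanti (Set.mem_Ici.mpr le_rfl) (Set.mem_Ici.mpr zero_le_one) zero_le_one
  simp only [ψ, zero_smul, one_smul, add_zero] at h
  linarith

theorem apply_sub_smul_le_sub {L η : ℝ} (hgrad : ∀ x, HasFDerivAt F (innerSL ℝ (g x)) x)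
    (hlip : ∀ x y, ‖g x - g y‖ ≤ L * ‖x - y‖) (hη : 0 ≤ η) (hηL : η * L ≤ 1) (x : H) :
    F (x - η • g x) ≤ F x - η / 2 * ‖g x‖ ^ 2 := by
  have h := apply_add_le_of_lipschitz_gradient hgrad hlip x (-(η • g x))
  rw [← sub_eq_add_neg, inner_neg_right, real_inner_smul_right, real_inner_self_eq_norm_sq,
    norm_neg, norm_smul, Real.norm_of_nonneg hη] at h
  have hquad : L / 2 * (η * ‖g x‖) ^ 2 ≤ η / 2 * ‖g x‖ ^ 2 := by
    have := mul_le_mul_of_nonneg_right hηL (by positivity : 0 ≤ η / 2 * ‖g x‖ ^ 2)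
    linarith
  linarith

theorem two_mul_sub_le_norm_sub_sq_sub_norm_sub_sq {L η : ℝ} (hconv : ConvexOn ℝ Set.univ F)
    (hgrad : ∀ x, HasFDerivAt F (innerSL ℝ (g x)) x)
    (hlip : ∀ x y, ‖g x - g y‖ ≤ L * ‖x - y‖) (hη : 0 ≤ η) (hηL : η * L ≤ 1) (x z : H) :
    2 * η * (F (x - η • g x) - F z) ≤ ‖x - z‖ ^ 2 - ‖x - η • g x - z‖ ^ 2 := by
  have hdesc := apply_sub_smul_le_sub hgrad hlip hη hηL x
  have hcvx := hconv.add_inner_sub_le hgrad x z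
  have hexp : ‖x - η • g x - z‖ ^ 2 = ‖x - z‖ ^ 2 - 2 * η * ⟪g x, x - z⟫ + η ^ 2 * ‖g x‖ ^ 2 := by
    rw [sub_right_comm, norm_sub_sq_real, norm_smul, Real.norm_of_nonneg hη,
      real_inner_smul_right, real_inner_comm]
    ring
  have hlin : ⟪g x, z - x⟫ = -⟪g x, x - z⟫ := by rw [← inner_neg_right, neg_sub]
  rw [hlin] at hcvx
  rw [hexp]
  nlinarith

end Gradient

theorem le_add_sum_Ico_of_le_add {a c : ℕ → ℝ} (h : ∀ t, a (t + 1) ≤ a t + c t) {m n : ℕ}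
    (hmn : m ≤ n) : a n ≤ a m + ∑ k ∈ Ico m n, c k := by
  induction n, hmn using Nat.le_induction with
  | base => simp
  | succ n hmn ih =>
    rw [sum_Ico_succ_top hmn]
    linarith [h n]

theorem gd_iterate_norm_bound_general
    {H : Type*} [NormedAddCommGroup H] [InnerProductSpace ℝ H]
    (F : H → ℝ) (g : H → H) (L B : ℝ)
    (hconv : ConvexOn ℝ Set.univ F)
    (hgrad : ∀ x : H, HasFDerivAt F (innerSL ℝ (g x)) x)
    (hlip : ∀ x y : H, ‖g x - g y‖ ≤ L * ‖x - y‖)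
    (hF0 : F 0 ≤ B) (hFpos : ∀ x, 0 ≤ F x)
    (η : ℕ → ℝ) (hη0 : ∀ t, 0 < η t) (hη1 : ∀ t, η t ≤ 1 / L)
    (f : ℕ → H) (hf1 : f 1 = 0)
    (hstep : ∀ t : ℕ, f (t + 1) = f t - η t • g (f t)) :
    ∀ t : ℕ, 1 ≤ t → ‖f (t + 1)‖ ^ 2 ≤ 2 * B * ∑ k ∈ Finset.Icc 1 t, η k := by
  intro t _
  have hL : 0 < L := one_div_pos.mp ((hη0 0).trans_le (hη1 0))
  have hnorm_step : ∀ t, ‖f (t + 1)‖ ^ 2 ≤ ‖f t‖ ^ 2 + 2 * B * η t := by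
    intro t
    have h := two_mul_sub_le_norm_sub_sq_sub_norm_sub_sq hconv hgrad hlip (hη0 t).le
      ((le_div_iff₀ hL).mp (hη1 t)) (f t) 0
    rw [sub_zero, sub_zero, ← hstep] at h
    nlinarith [hFpos (f (t + 1)), hη0 t]
  have h := le_add_sum_Ico_of_le_add (a := fun t => ‖f t‖ ^ 2) hnorm_step (Nat.le_add_left 1 t)
  rwa [hf1, norm_zero, zero_pow two_ne_zero, zero_add, Ico_add_one_right_eq_Icc, ← mul_sum] at h

theorem gd_iterate_norm_bound
    {H : Type*} [NormedAddCommGroup H] [InnerProductSpace ℝ H]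
    (F : H → ℝ) (g : H → H) (L B : ℝ) (hL : 0 < L) (hB : 0 ≤ B)
    (hconv : ConvexOn ℝ Set.univ F)
    (hgrad : ∀ x : H, HasFDerivAt F (innerSL ℝ (g x)) x)
    (hlip : ∀ x y : H, ‖g x - g y‖ ≤ L * ‖x - y‖)
    (hF0 : F 0 ≤ B) (hFpos : ∀ x, 0 ≤ F x)
    (η : ℕ → ℝ) (hη0 : ∀ t, 0 < η t) (hη1 : ∀ t, η t ≤ 1 / L)
    (f : ℕ → H) (hf1 : f 1 = 0)
    (hstep : ∀ t : ℕ, f (t + 1) = f t - η t • g (f t)) :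
    ∀ t : ℕ, 1 ≤ t → ‖f (t + 1)‖ ^ 2 ≤ 2 * B * ∑ k ∈ Finset.Icc 1 t, η k :=
  gd_iterate_norm_bound_general F g L B hconv hgrad hlip hF0 hFpos η hη0 hη1 f hf1 hstep
end
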